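/- For all complex numbers t, f, g, a, the function ε ↦ (ε³/2)·F_III(1+ε²t, 1+2εf, 2g/ε, −1/(2ε⁶), 2a/ε³ + 1/(2ε⁶), 1/(4ε⁶), −1/(4ε⁶)) tends to 2f³ + tf + a as ε → 0 along nonzero complex values of ε (i.e., along the punctured neighborhood filter of 0 in ℂ). -/

import Mathlib

/-!
Write `u = 1 + 2εf` and `x = 1 + ε²t`. After multiplying by `ε³/2`, the terms of `F_III` of order
`ε⁻³` combine to `(u² - 1)((u² + 1)x - 2u) / (8ε³ux)`, and both factors of the numerator vanish at
`ε = 0`: `u² - 1 = 4εf(1 + εf)` and `(u² + 1)x - 2u = ε²(4f² + t(u² + 1))`. So for `ε ≠ 0` the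
rescaled right-hand side is a rational function of `ε` that is regular at `0`, and its value there
is `2f³ + tf + a`.
-/

/-- Right-hand side of the third Painlevé equation:
`F_III(x,u,v,α,β,γ,δ) = v²/u − v/x + (αu²+β)/x + γu³ + δ/u`. -/
noncomputable def FIII (x u v α β γ δ : ℂ) : ℂ :=
  v ^ 2 / u - v / x + (α * u ^ 2 + β) / x + γ * u ^ 3 + δ / u

noncomputable def regularizedFIII (t f g a ε : ℂ) : ℂ :=
  let u := 1 + 2 * ε * f
  let x := 1 + ε ^ 2 * t
  2 * g ^ 2 * ε / u - g * ε ^ 2 / x + f * (1 + ε * f) * (4 * f ^ 2 + t * (u ^ 2 + 1)) / (2 * u * x)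
    + a / x

theorem FIII_rescaled_eq (t f g a : ℂ) {ε : ℂ} (hε : ε ≠ 0) (hu : 1 + 2 * ε * f ≠ 0)
    (hx : 1 + ε ^ 2 * t ≠ 0) :
    ε ^ 3 / 2 * FIII (1 + ε ^ 2 * t) (1 + 2 * ε * f) (2 * g / ε)
      (-1 / (2 * ε ^ 6)) (2 * a / ε ^ 3 + 1 / (2 * ε ^ 6)) (1 / (4 * ε ^ 6)) (-1 / (4 * ε ^ 6))
      = regularizedFIII t f g a ε := by
  unfold FIII regularizedFIII
  generalize hu' : 1 + 2 * ε * f = u at hu ⊢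
  generalize hx' : 1 + ε ^ 2 * t = x at hx ⊢
  field_simp
  subst hu' hx'
  ring

theorem continuousAt_regularizedFIII (t f g a : ℂ) :
    ContinuousAt (regularizedFIII t f g a) 0 := by
  unfold regularizedFIII
  fun_prop (disch := simp)

theorem regularizedFIII_zero (t f g a : ℂ) :
    regularizedFIII t f g a 0 = 2 * f ^ 3 + t * f + a := by
  simp only [regularizedFIII]
  ring

theorem stmt_3 (t f g a : ℂ) :
    Filter.Tendsto
      (fun ε : ℂ =>
        (ε ^ 3 / 2) *
          FIII (1 + ε ^ 2 * t) (1 + 2 * ε * f) (2 * g / ε)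
            (-1 / (2 * ε ^ 6)) (2 * a / ε ^ 3 + 1 / (2 * ε ^ 6))
            (1 / (4 * ε ^ 6)) (-1 / (4 * ε ^ 6)))
      (nhdsWithin 0 {0}ᶜ) (nhds (2 * f ^ 3 + t * f + a)) := by
  have hlim := (continuousAt_regularizedFIII t f g a).tendsto
  rw [regularizedFIII_zero] at hlim
  have hu : ∀ᶠ ε in nhds (0 : ℂ), 1 + 2 * ε * f ≠ 0 :=
    (by fun_prop : Continuous fun ε : ℂ => 1 + 2 * ε * f).continuousAt.eventually_ne (by simp)
  have hx : ∀ᶠ ε in nhds (0 : ℂ), 1 + ε ^ 2 * t ≠ 0 :=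
    (by fun_prop : Continuous fun ε : ℂ => 1 + ε ^ 2 * t).continuousAt.eventually_ne (by simp)
  refine (hlim.mono_left nhdsWithin_le_nhds).congr' ?_
  filter_upwards [self_mem_nhdsWithin, nhdsWithin_le_nhds hu, nhdsWithin_le_nhds hx]
    with ε hε hu hx
  exact (FIII_rescaled_eq t f g a hε hu hx).symm
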